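/- arXiv:1811.06311 — 3 statements merged into one kernel-verified Lean document; each statement's English description precedes it below -/
import Mathlib

section
/- Let $\varphi_n$ be defined by the recursion $\varphi_1 = \mathbf{1} - u_0$ and $\varphi_n = \mathbf{1} - u_{n-1} - \varphi_{n-1}^{-1} v_{n-1}$ for $n \geq 2$, where $u_{n-1} = \zeta_{2n-1} + \zeta_{2n-2}$ (with $\zeta_0 = \mathbf{0}$), $v_{n-1} = \zeta_{2n-3}\zeta_{2n-2}$, $\zeta_1 = U_1$, $\zeta_k = (\mathbf{1} - U_{k-1})U_k$ for $k > 1$, and $V_k = \mathbf{1} - U_k$ with $V_0 = \mathbf{1}$. If all matrices $V_k$ are invertible, then $\varphi_n = V_{2n-2} V_{2n-1}$ for all $n \geq 1$. -/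
/-!
Write `V k = 1 - U k`. Since `U 0 = 0`, every `ζ k` with `k ≥ 1` is `V (k - 1) * U k`, and by
induction `φ n = V (2n-2) * V (2n-1)`. In the Schur complement term the factor `V (2n-2)` of
`φ n` cancels against the left factor of `ζ (2n-1)`, and `V (2n-1)` cancels against the left
factor of `ζ (2n)` because it commutes with `U (2n-1) = 1 - V (2n-1)`. What remains is
`U (2n-1) * U (2n)`, which combines with `ζ (2n)` to `U (2n)`, leaving `V (2n) * V (2n+1)`.
-/

namespace Matrix

variable {n : Type*} [Fintype n] [DecidableEq n] {α : Type*} [CommRing α]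

theorem mul_inv_mul_mul_mul_cancel {A B W X : Matrix n n α} (hA : IsUnit A) (hB : IsUnit B)
    (hWB : Commute W B) : (A * B)⁻¹ * (A * W * (B * X)) = W * X := by
  rw [isUnit_iff_isUnit_det] at hA hB
  rw [mul_inv_rev, Matrix.mul_assoc, Matrix.mul_assoc,
    nonsing_inv_mul_cancel_left (A := A) _ hA,
    ← Matrix.mul_assoc W, hWB.eq, Matrix.mul_assoc, nonsing_inv_mul_cancel_left (A := B) _ hB]

theorem one_sub_sub_schur_complement {A W X Y : Matrix n n α} (hA : IsUnit A)
    (hW : IsUnit (1 - W)) :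
    1 - ((1 - X) * Y + (1 - W) * X) - (A * (1 - W))⁻¹ * (A * W * ((1 - W) * X)) =
      (1 - X) * (1 - Y) := by
  rw [mul_inv_mul_mul_mul_cancel hA hW (Commute.one_right W |>.sub_right (Commute.refl W))]
  noncomm_ring

end Matrix

/-- The Schur complement recursion for `φ_n` arising in the computation of
`det(I_n - J_n)` is solved by `φ_n = V_{2n-2} V_{2n-1}` where `V_k = 1 - U_k`. -/
theorem phi_recursion_solution (p : ℕ)
    (U ζ u v φ : ℕ → Matrix (Fin p) (Fin p) ℂ)
    (hU0 : U 0 = 0)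
    (hζ0 : ζ 0 = 0) (hζ1 : ζ 1 = U 1)
    (hζ : ∀ k, 2 ≤ k → ζ k = (1 - U (k - 1)) * U k)
    (hu : ∀ k, u k = ζ (2 * k + 1) + ζ (2 * k))
    (hv : ∀ k, 1 ≤ k → v k = ζ (2 * k - 1) * ζ (2 * k))
    (hφ1 : φ 1 = 1 - u 0)
    (hφ : ∀ k, 2 ≤ k → φ k = 1 - u (k - 1) - (φ (k - 1))⁻¹ * v (k - 1))
    (hinv : ∀ k, IsUnit ((1 : Matrix (Fin p) (Fin p) ℂ) - U k)) :
    ∀ n, 1 ≤ n → φ n = (1 - U (2 * n - 2)) * (1 - U (2 * n - 1)) := by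
  have hζ_pos : ∀ k, 1 ≤ k → ζ k = (1 - U (k - 1)) * U k := by
    intro k hk
    rcases hk.eq_or_lt with rfl | hk
    · simp [hζ1, hU0]
    · exact hζ k hk
  intro n hn
  induction n, hn using Nat.le_induction with
  | base => simp [hφ1, hu 0, hζ0, hζ1, hU0]
  | succ k hk ih =>
    have hφk : φ (k + 1) = 1 - u k - (φ k)⁻¹ * v k := hφ (k + 1) (by omega)
    have hζ_odd : ζ (2 * k + 1) = (1 - U (2 * k)) * U (2 * k + 1) := hζ_pos _ (by omega)
    have hζ_even : ζ (2 * k) = (1 - U (2 * k - 1)) * U (2 * k) := hζ_pos _ (by omega)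
    have hζ_prev : ζ (2 * k - 1) = (1 - U (2 * k - 2)) * U (2 * k - 1) := hζ_pos _ (by omega)
    show φ (k + 1) = (1 - U (2 * k)) * (1 - U (2 * k + 1))
    rw [hφk, hu, hv k hk, ih, hζ_odd, hζ_even, hζ_prev]
    exact Matrix.one_sub_sub_schur_complement (hinv _) (hinv _)
end

section
/- Let $J_n$ be the $np \times np$ Hermitian block tridiagonal matrix with diagonal blocks $\mathcal{B}_1, \ldots, \mathcal{B}_n$ and off-diagonal blocks $\tilde{\mathcal{A}}_1, \ldots, \tilde{\mathcal{A}}_{n-1}$ arising from a matrix measure on $[0,1]$ with canonical moments $U_1, \ldots, U_{2n-1}$ satisfying $\mathbf{0} < U_k < \mathbf{1}$. Then $\det(I_{np} - J_n) = \prod_{k=1}^{2n-1} \det(\mathbf{1} - U_k)$. -/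
/-!
Conjugating by the block diagonal matrix `D = diag(γ₀^{1/2}, …, γ_{n-1}^{1/2})` turns
`I - J_n` into the monic block Jacobi matrix with diagonal blocks `1 - u_i`, superdiagonal
blocks `-v_{i+1}` and subdiagonal blocks `-1`. Because `u_i` and `v_i` are built from the
`ζ_k = (1 - U_{k-1}) U_k`, this matrix has the block LU factorisation `L R`, where `L` has
diagonal blocks `1 - U_1` and `(1 - U_{2i})(1 - U_{2i+1})` and subdiagonal blocks `-1`, and `R`
is unit upper bidiagonal with blocks `-U_{2i+1} U_{2i+2}`. Both factors are block triangular,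
so `det(I - J_n) = det L = ∏_{k=1}^{2n-1} det(1 - U_k)`.
-/

open Matrix
open scoped ComplexOrder

theorem Finset.prod_Icc_one_two_mul_sub_one {M : Type*} [CommMonoid M] (f : ℕ → M) (n : ℕ) :
    ∏ k ∈ Finset.Icc 1 (2 * n - 1), f k =
      ∏ i ∈ Finset.range n, if i = 0 then f 1 else f (2 * i) * f (2 * i + 1) := by
  induction n with
  | zero => simp
  | succ n ih =>
    rw [Finset.prod_range_succ, ← ih]
    rcases n with _ | n
    · simp
    · rw [if_neg n.succ_ne_zero, show 2 * (n + 1 + 1) - 1 = 2 * (n + 1) - 1 + 1 + 1 by omega,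
        Finset.prod_Icc_succ_top (by omega), Finset.prod_Icc_succ_top (by omega),
        show 2 * (n + 1) - 1 + 1 = 2 * (n + 1) by omega, mul_assoc]

namespace Matrix

section Tridiagonal

variable {A : Type*} {n : ℕ}

-- `c i` sits at block position `(i, i + 1)` and `l j` at `(j + 1, j)`.
def tridiagonal [Zero A] (n : ℕ) (d c l : ℕ → A) : Matrix (Fin n) (Fin n) A :=
  of fun i j =>
    if i = j then d i else if (j : ℕ) = i + 1 then c i else if (i : ℕ) = j + 1 then l j else 0

theorem tridiagonal_add [AddZeroClass A] (d c l d' c' l' : ℕ → A) :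
    tridiagonal n d c l + tridiagonal n d' c' l' = tridiagonal n (d + d') (c + c') (l + l') := by
  ext i j
  simp only [tridiagonal, add_apply, of_apply, Pi.add_apply]
  split_ifs <;> simp

theorem diagonal_eq_tridiagonal [Zero A] (d : ℕ → A) :
    diagonal (fun i : Fin n => d i) = tridiagonal n d 0 0 := by
  ext i j
  simp only [diagonal_apply, tridiagonal, of_apply, Pi.zero_apply]
  split_ifs <;> simp_all

theorem one_sub_tridiagonal [AddGroupWithOne A] (d c l : ℕ → A) :
    1 - tridiagonal n d c l = tridiagonal n (1 - d) (-c) (-l) := by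
  ext i j
  simp only [tridiagonal, sub_apply, one_apply, of_apply, Pi.sub_apply, Pi.neg_apply, Pi.one_apply]
  split_ifs <;> simp_all

theorem diagonal_mul_tridiagonal [NonUnitalNonAssocSemiring A] (s d c l : ℕ → A) :
    diagonal (fun i : Fin n => s i) * tridiagonal n d c l =
      tridiagonal n (fun i => s i * d i) (fun i => s i * c i) (fun j => s (j + 1) * l j) := by
  ext i j
  simp only [diagonal_mul, tridiagonal, of_apply]
  split_ifs with h₁ h₂ h₃
  · rfl
  · rfl
  · rw [h₃]
  · simp

theorem tridiagonal_mul_diagonal [NonUnitalNonAssocSemiring A] (t d c l : ℕ → A) :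
    tridiagonal n d c l * diagonal (fun i : Fin n => t i) =
      tridiagonal n (fun i => d i * t i) (fun i => c i * t (i + 1)) (fun j => l j * t j) := by
  ext i j
  simp only [mul_diagonal, tridiagonal, of_apply]
  split_ifs with h₁ h₂ h₃
  · rw [h₁]
  · rw [h₂]
  · rfl
  · simp

theorem tridiagonal_subdiagonal_mul_superdiagonal [NonUnitalNonAssocSemiring A] (l w : ℕ → A) :
    tridiagonal n 0 0 l * tridiagonal n 0 w 0 =
      tridiagonal n (fun i => if i = 0 then 0 else l (i - 1) * w (i - 1)) 0 0 := by
  ext i j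
  have hsub : ∀ k : Fin n, tridiagonal n 0 0 l i k = if (i : ℕ) = k + 1 then l k else 0 := by
    intro k; simp only [tridiagonal, of_apply, Pi.zero_apply]; split_ifs <;> first | rfl | omega
  have hsup : ∀ k : Fin n, tridiagonal n 0 w 0 k j = if (j : ℕ) = k + 1 then w k else 0 := by
    intro k; simp only [tridiagonal, of_apply, Pi.zero_apply]; split_ifs <;> first | rfl | omega
  rw [← diagonal_eq_tridiagonal, diagonal_apply]
  simp only [mul_apply, hsub, hsup, ite_zero_mul_ite_zero]
  obtain ⟨_ | i, hi⟩ := i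
  · simp
  · rw [Finset.sum_eq_single ⟨i, by omega⟩
      (fun k _ hk => if_neg fun h => hk (Fin.ext (by simp only at h ⊢; omega))) (by simp)]
    simp [Fin.ext_iff, eq_comm]

theorem tridiagonal_lower_mul_upper [NonAssocSemiring A] (g l w : ℕ → A) :
    tridiagonal n g 0 l * tridiagonal n 1 w 0 =
      tridiagonal n (fun i => g i + if i = 0 then 0 else l (i - 1) * w (i - 1))
        (fun i => g i * w i) l := by
  have hlower : tridiagonal n g 0 l = diagonal (fun i : Fin n => g i) + tridiagonal n 0 0 l := by
    rw [diagonal_eq_tridiagonal, tridiagonal_add]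
    simp only [add_zero, zero_add]
  have hupper : tridiagonal n 1 w 0 = 1 + tridiagonal n 0 w 0 := by
    rw [← diagonal_one, diagonal_eq_tridiagonal (fun _ => 1), ← Pi.one_def, tridiagonal_add]
    simp only [add_zero, zero_add]
  rw [hlower, hupper, mul_add, add_mul, add_mul, mul_one, mul_one, diagonal_mul_tridiagonal,
    tridiagonal_subdiagonal_mul_superdiagonal, diagonal_eq_tridiagonal]
  simp only [tridiagonal_add]
  congr 1 <;> funext i <;> simp

end Tridiagonal

section BlockDeterminant

variable {m R : Type*} [Fintype m] [DecidableEq m] [CommRing R] {n : ℕ}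

theorem det_compRingEquiv_of_blockTriangular {I α : Type*} [Fintype I] [DecidableEq I]
    [Fintype α] [LinearOrder α] (e : I ≃ α) {M : Matrix I I (Matrix m m R)}
    (hM : M.BlockTriangular e) :
    (compRingEquiv I m R M).det = ∏ i, (M i i).det := by
  have hcomp : (compRingEquiv I m R M).BlockTriangular (e ∘ Prod.fst) := fun x y h => by
    simp [hM h]
  rw [hcomp.det_fintype, ← e.prod_comp]
  refine Finset.prod_congr rfl fun i _ => ?_
  let f : m ≃ {x : I × m // (e ∘ Prod.fst) x = e i} :=
    { toFun a := ⟨(i, a), rfl⟩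
      invFun x := x.1.2
      left_inv _ := rfl
      right_inv x := Subtype.ext (Prod.ext (e.injective x.2).symm rfl) }
  rw [← det_submatrix_equiv_self f]
  rfl

theorem det_compRingEquiv_diagonal_mul_mul_diagonal {I : Type*} [Fintype I] [DecidableEq I]
    (s t : I → Matrix m m R) (hst : ∀ i, s i * t i = 1) (X : Matrix I I (Matrix m m R)) :
    (compRingEquiv I m R (diagonal s * X * diagonal t)).det = (compRingEquiv I m R X).det := by
  rw [map_mul, map_mul, det_mul, det_mul, mul_right_comm, ← det_mul, ← map_mul,
    diagonal_mul_diagonal, funext hst, diagonal_one, map_one, det_one, one_mul]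

theorem det_compRingEquiv_tridiagonal_upper (d c : ℕ → Matrix m m R) :
    (compRingEquiv (Fin n) m R (tridiagonal n d c 0)).det = ∏ i : Fin n, (d i).det := by
  rw [det_compRingEquiv_of_blockTriangular (M := tridiagonal n d c 0) (Equiv.refl (Fin n))
    fun i j h => ?_]
  · simp [tridiagonal]
  change j < i at h
  simp only [tridiagonal, of_apply, Pi.zero_apply]
  split_ifs <;> first | rfl | omega

theorem det_compRingEquiv_tridiagonal_lower (d l : ℕ → Matrix m m R) :
    (compRingEquiv (Fin n) m R (tridiagonal n d 0 l)).det = ∏ i : Fin n, (d i).det := by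
  rw [det_compRingEquiv_of_blockTriangular (M := tridiagonal n d 0 l) OrderDual.toDual
    fun i j h => ?_]
  · simp [tridiagonal]
  change i < j at h
  simp only [tridiagonal, of_apply, Pi.zero_apply]
  split_ifs <;> first | rfl | omega

end BlockDeterminant

section CanonicalMoments

variable {R : Type*} [Ring R]

-- The pivots `G i` and superdiagonal blocks `w i` of the block LU factorisation of the monic
-- Jacobi matrix with diagonal `1 - u i`, superdiagonal `-v (i + 1)` and subdiagonal `-1`.
def jacobiPivot (U : ℕ → R) (i : ℕ) : R :=
  if i = 0 then 1 - U 1 else (1 - U (2 * i)) * (1 - U (2 * i + 1))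

def jacobiUpper (U : ℕ → R) (i : ℕ) : R :=
  -(U (2 * i + 1) * U (2 * i + 2))

variable {U ζ u v : ℕ → R}

theorem jacobiPivot_add_jacobiUpper (hζ0 : ζ 0 = 0) (hζ1 : ζ 1 = U 1)
    (hζ : ∀ k, ζ (k + 2) = (1 - U (k + 1)) * U (k + 2))
    (hu : ∀ k, u k = ζ (2 * k + 1) + ζ (2 * k)) (i : ℕ) :
    jacobiPivot U i + (if i = 0 then 0 else -1 * jacobiUpper U (i - 1)) = 1 - u i := by
  rcases i with _ | i
  · simp [jacobiPivot, hu 0, hζ0, hζ1]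
  · have hodd : ζ (2 * (i + 1) + 1) = (1 - U (2 * i + 2)) * U (2 * i + 3) := hζ (2 * i + 1)
    have heven : ζ (2 * (i + 1)) = (1 - U (2 * i + 1)) * U (2 * i + 2) := hζ (2 * i)
    rw [hu, hodd, heven]
    simp only [jacobiPivot, jacobiUpper, if_neg i.succ_ne_zero, Nat.add_sub_cancel, mul_add,
      mul_one]
    noncomm_ring

theorem jacobiPivot_mul_jacobiUpper (hζ1 : ζ 1 = U 1)
    (hζ : ∀ k, ζ (k + 2) = (1 - U (k + 1)) * U (k + 2))
    (hv : ∀ k, v (k + 1) = ζ (2 * k + 1) * ζ (2 * k + 2)) (i : ℕ) :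
    jacobiPivot U i * jacobiUpper U i = -v (i + 1) := by
  rw [hv, hζ (2 * i)]
  rcases i with _ | i
  · simp only [jacobiPivot, jacobiUpper, hζ1, if_pos]
    noncomm_ring
  · have hodd : ζ (2 * (i + 1) + 1) = (1 - U (2 * i + 2)) * U (2 * i + 3) := hζ (2 * i + 1)
    rw [hodd]
    simp only [jacobiPivot, jacobiUpper, if_neg i.succ_ne_zero, mul_add, mul_one]
    noncomm_ring

theorem tridiagonal_monicJacobi_eq_mul {n : ℕ} (hζ0 : ζ 0 = 0) (hζ1 : ζ 1 = U 1)
    (hζ : ∀ k, ζ (k + 2) = (1 - U (k + 1)) * U (k + 2))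
    (hu : ∀ k, u k = ζ (2 * k + 1) + ζ (2 * k))
    (hv : ∀ k, v (k + 1) = ζ (2 * k + 1) * ζ (2 * k + 2)) :
    tridiagonal n (1 - u) (fun i => -v (i + 1)) (-1) =
      tridiagonal n (jacobiPivot U) 0 (-1) * tridiagonal n 1 (jacobiUpper U) 0 := by
  rw [tridiagonal_lower_mul_upper]
  congr 1 <;> funext i
  · exact (jacobiPivot_add_jacobiUpper hζ0 hζ1 hζ hu i).symm
  · exact (jacobiPivot_mul_jacobiUpper hζ1 hζ hv i).symm

end CanonicalMoments

section BlockJacobi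

variable {m R : Type*} [Fintype m] [DecidableEq m] [CommRing R]

theorem prod_det_jacobiPivot (U : ℕ → Matrix m m R) (n : ℕ) :
    ∏ i : Fin n, (jacobiPivot U i).det = ∏ k ∈ Finset.Icc 1 (2 * n - 1), (1 - U k).det := by
  rw [Finset.prod_Icc_one_two_mul_sub_one, ← Fin.prod_univ_eq_prod_range]
  simp only [jacobiPivot, apply_ite det, det_mul]

theorem one_sub_tridiagonal_eq_diagonal_conj [StarRing R] {n : ℕ}
    {S u v B A : ℕ → Matrix m m R}
    (hS : ∀ k, IsUnit (S k).det) (hSH : ∀ k, (S k)ᴴ = S k)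
    (hSv : ∀ i, S (i + 1) * S (i + 1) = S i * S i * v (i + 1))
    (hB : ∀ i, B i = S i * u i * (S i)⁻¹) (hA : ∀ i, A i = (S i)⁻¹ * S (i + 1)) :
    1 - tridiagonal n B A (fun j => (A j)ᴴ) =
      diagonal (fun i : Fin n => S i) * tridiagonal n (1 - u) (fun i => -v (i + 1)) (-1) *
        diagonal (fun i : Fin n => (S i)⁻¹) := by
  rw [one_sub_tridiagonal, diagonal_mul_tridiagonal, tridiagonal_mul_diagonal fun i => (S i)⁻¹]
  congr 1 <;> funext i <;> simp only [Pi.sub_apply, Pi.one_apply, Pi.neg_apply]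
  · rw [mul_sub, sub_mul, mul_one, mul_nonsing_inv _ (hS i), hB]
  · have hv : v (i + 1) = (S i)⁻¹ * ((S i)⁻¹ * (S (i + 1) * S (i + 1))) := by
      rw [hSv, Matrix.mul_assoc, nonsing_inv_mul_cancel_left _ _ (hS i),
        nonsing_inv_mul_cancel_left _ _ (hS i)]
    rw [hA, hv, mul_neg, neg_mul, mul_nonsing_inv_cancel_left _ _ (hS i),
      ← Matrix.mul_assoc, mul_nonsing_inv_cancel_right _ _ (hS (i + 1))]
  · rw [hA, conjTranspose_mul, conjTranspose_nonsing_inv, hSH, hSH, mul_neg_one, neg_mul]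

end BlockJacobi

end Matrix

theorem det_one_sub_block_jacobi_general (p n : ℕ)
    (U ζ u v γ S B A : ℕ → Matrix (Fin p) (Fin p) ℂ)
    (hζ0 : ζ 0 = 0) (hζ1 : ζ 1 = U 1)
    (hζ : ∀ k, 2 ≤ k → ζ k = (1 - U (k - 1)) * U k)
    (hu : ∀ k, u k = ζ (2 * k + 1) + ζ (2 * k))
    (hv : ∀ k, 1 ≤ k → v k = ζ (2 * k - 1) * ζ (2 * k))
    (hγ : ∀ k, 1 ≤ k → γ k = γ (k - 1) * v k)
    (hS : ∀ k, (S k).PosDef ∧ S k * S k = γ k)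
    (hB : ∀ k, 1 ≤ k → B k = S (k - 1) * u (k - 1) * (S (k - 1))⁻¹)
    (hA : ∀ k, 1 ≤ k → A k = (S (k - 1))⁻¹ * S k)
    (J : Matrix (Fin n × Fin p) (Fin n × Fin p) ℂ)
    (hJ : ∀ (i : Fin n) (a : Fin p) (j : Fin n) (b : Fin p),
      J (i, a) (j, b) =
        if i = j then B ((i : ℕ) + 1) a b
        else if (j : ℕ) = (i : ℕ) + 1 then A ((i : ℕ) + 1) a b
        else if (i : ℕ) = (j : ℕ) + 1 then (A ((j : ℕ) + 1))ᴴ a b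
        else 0) :
    ((1 : Matrix (Fin n × Fin p) (Fin n × Fin p) ℂ) - J).det
      = ∏ k ∈ Finset.Icc 1 (2 * n - 1), ((1 : Matrix (Fin p) (Fin p) ℂ) - U k).det := by
  have hSdet (k : ℕ) : IsUnit (S k).det := (hS k).1.det_pos.ne'.isUnit
  have hJ_eq : J = compRingEquiv (Fin n) (Fin p) ℂ
      (tridiagonal n (fun i => B (i + 1)) (fun i => A (i + 1)) fun j => (A (j + 1))ᴴ) := by
    ext ⟨i, a⟩ ⟨j, b⟩
    simp only [hJ, compRingEquiv_apply, comp_apply, tridiagonal, of_apply]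
    split_ifs <;> rfl
  have hconj := one_sub_tridiagonal_eq_diagonal_conj (n := n) (u := u) hSdet
    (fun k => (hS k).1.1)
    (fun i => by rw [(hS _).2, (hS _).2, hγ (i + 1) i.succ_pos, Nat.add_sub_cancel])
    (fun i => hB (i + 1) i.succ_pos) (fun i => hA (i + 1) i.succ_pos)
  have hLU := tridiagonal_monicJacobi_eq_mul (n := n) hζ0 hζ1 (fun k => hζ (k + 2) le_add_self)
    hu (fun k => hv (k + 1) k.succ_pos)
  rw [hJ_eq, ← map_one (compRingEquiv (Fin n) (Fin p) ℂ), ← map_sub, hconj,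
    det_compRingEquiv_diagonal_mul_mul_diagonal _ _ fun i : Fin n => mul_nonsing_inv _ (hSdet i),
    hLU, map_mul, det_mul, det_compRingEquiv_tridiagonal_lower, det_compRingEquiv_tridiagonal_upper]
  simp only [Pi.one_apply, det_one, Finset.prod_const_one, mul_one, prod_det_jacobiPivot]

/-- For the `np × np` Hermitian block Jacobi matrix `J_n` of a matrix measure on
`[0,1]` with canonical moments `U_1, …, U_{2n-1}` satisfying `0 < U_k < 1`,
one has `det(I_{np} - J_n) = ∏_{k=1}^{2n-1} det(1 - U_k)`.
Here `ζ, u, v` are the Dette–Studden decomposition of the recursion coefficients,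
`γ_k` the Gram matrices (with `γ_0 = 1` and `γ_k = γ_{k-1} v_k`), `S_k` the positive
definite square root of `γ_k`, and `B_k = γ_{k-1}^{1/2} u_{k-1} γ_{k-1}^{-1/2}`,
`Ã_k = γ_{k-1}^{-1/2} γ_k^{1/2}` the Hermitian (orthonormal) recursion coefficients. -/
theorem det_one_sub_block_jacobi (p n : ℕ) (hp : 0 < p) (hn : 0 < n)
    (U ζ u v γ S B A : ℕ → Matrix (Fin p) (Fin p) ℂ)
    (hU : ∀ k, 1 ≤ k → k ≤ 2 * n - 1 →
      (U k).PosDef ∧ ((1 : Matrix (Fin p) (Fin p) ℂ) - U k).PosDef)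
    (hζ0 : ζ 0 = 0) (hζ1 : ζ 1 = U 1)
    (hζ : ∀ k, 2 ≤ k → ζ k = (1 - U (k - 1)) * U k)
    (hu : ∀ k, u k = ζ (2 * k + 1) + ζ (2 * k))
    (hv : ∀ k, 1 ≤ k → v k = ζ (2 * k - 1) * ζ (2 * k))
    (hγ0 : γ 0 = 1)
    (hγ : ∀ k, 1 ≤ k → γ k = γ (k - 1) * v k)
    (hS : ∀ k, (S k).PosDef ∧ S k * S k = γ k)
    (hB : ∀ k, 1 ≤ k → B k = S (k - 1) * u (k - 1) * (S (k - 1))⁻¹)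
    (hA : ∀ k, 1 ≤ k → A k = (S (k - 1))⁻¹ * S k)
    (J : Matrix (Fin n × Fin p) (Fin n × Fin p) ℂ)
    (hJ : ∀ (i : Fin n) (a : Fin p) (j : Fin n) (b : Fin p),
      J (i, a) (j, b) =
        if i = j then B ((i : ℕ) + 1) a b
        else if (j : ℕ) = (i : ℕ) + 1 then A ((i : ℕ) + 1) a b
        else if (i : ℕ) = (j : ℕ) + 1 then (A ((j : ℕ) + 1))ᴴ a b
        else 0) :
    ((1 : Matrix (Fin n × Fin p) (Fin n × Fin p) ℂ) - J).det
      = ∏ k ∈ Finset.Icc 1 (2 * n - 1), ((1 : Matrix (Fin p) (Fin p) ℂ) - U k).det :=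
  det_one_sub_block_jacobi_general p n U ζ u v γ S B A hζ0 hζ1 hζ hu hv hγ hS hB hA J hJ
end

section
/- Let $\Sigma_{\mathbb{R}}$ be a nontrivial $p \times p$ matrix measure on $[-2,2]$ and $\Sigma_{\mathbb{T}}$ the symmetric measure on the unit circle with $\mathrm{Sz}(\Sigma_{\mathbb{T}}) = \Sigma_{\mathbb{R}}$, where $\mathrm{Sz}$ is induced by $z \mapsto z + z^{-1}$. If $\hat{P}_n$ is the $n$-th right monic orthogonal polynomial for $\Sigma_{\mathbb{R}}$ and $\mathbf{\Phi}_{2n}$ the $2n$-th right monic orthogonal polynomial for $\Sigma_{\mathbb{T}}$, then $\hat{P}_n(z + z^{-1}) = [z^{-n}\mathbf{\Phi}_{2n}(z) + z^n \mathbf{\Phi}_{2n}(z^{-1})] \boldsymbol{\tau}_n^{-1}$, where $\boldsymbol{\tau}_n = \mathbf{1} + \mathbf{\Phi}_{2n}(0)$. -/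
/-!
Write `S(z) = Φ₂ₙ(z) + z²ⁿ Φ₂ₙ(z⁻¹)` and `L(z) = zⁿ P̂ₙ(z + z⁻¹)`, matrix polynomials of degree
`2n`. Since the measure is symmetric, the reversed polynomial `z²ⁿ Φ₂ₙ(z⁻¹)` is orthogonal to
`z, …, z²ⁿ`, so `S` is orthogonal to `z, …, z²ⁿ⁻¹`. Since `zᵐ + z⁻ᵐ` is a polynomial of degree `|m|`
in `z + z⁻¹` (a rescaled Chebyshev polynomial), symmetry also gives `P̂ₙ(z + z⁻¹) ⊥ zᵐ` for
`|m| < n`, i.e. `L` is orthogonal to `z, …, z²ⁿ⁻¹`. Both `S` and `L τₙ` have constant and leading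
coefficient `τₙ`, so `S - L τₙ` lies in the span of `z, …, z²ⁿ⁻¹` and is orthogonal to itself;
nontriviality of the measure makes it vanish. The same argument shows that `τₙ` is invertible: if
`τₙ V = 0`, then first `S V = 0`, and then `Φ₂ₙ V = -z²ⁿ Φ₂ₙ(z⁻¹) V` is orthogonal to `1, …, z²ⁿ`,
so `V = 0`.
-/

open Matrix MeasureTheory Complex
open scoped ComplexOrder

namespace YakhlefMarcellan
noncomputable section

section MatrixPolynomial

open Polynomial

variable {K M : Type*} [Field K] [AddCommGroup M] [Module K M]

def mpoly (C : ℕ → M) (d : ℕ) (z : K) : M :=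
  ∑ k ∈ Finset.range (d + 1), z ^ k • C k

lemma mpoly_zero (C : ℕ → M) (d : ℕ) : mpoly C d (0 : K) = C 0 := by
  simp [mpoly, Finset.sum_range_succ']

lemma mpoly_add (C D : ℕ → M) (d : ℕ) (z : K) :
    mpoly (fun k => C k + D k) d z = mpoly C d z + mpoly D d z := by
  simp only [mpoly, smul_add, Finset.sum_add_distrib]

lemma mpoly_sub (C D : ℕ → M) (d : ℕ) (z : K) :
    mpoly (fun k => C k - D k) d z = mpoly C d z - mpoly D d z := by
  simp only [mpoly, smul_sub, Finset.sum_sub_distrib]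

lemma mpoly_neg (C : ℕ → M) (d : ℕ) (z : K) : mpoly (fun k => -C k) d z = -mpoly C d z := by
  simp only [mpoly, smul_neg, Finset.sum_neg_distrib]

lemma mpoly_congr {C D : ℕ → M} {d : ℕ} (h : ∀ k ≤ d, C k = D k) (z : K) :
    mpoly C d z = mpoly D d z :=
  Finset.sum_congr rfl fun k hk => by rw [h k (Nat.lt_succ_iff.mp (Finset.mem_range.mp hk))]

lemma mpoly_mul_const {m n l : Type*} [Fintype n] (C : ℕ → Matrix m n K) (d : ℕ) (z : K)
    (V : Matrix n l K) : mpoly C d z * V = mpoly (fun k => C k * V) d z := by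
  simp only [mpoly, Matrix.sum_mul, Matrix.smul_mul]

lemma mul_mpoly {m n l : Type*} [Fintype n] (M : Matrix m n K) (C : ℕ → Matrix n l K) (d : ℕ)
    (z : K) : M * mpoly C d z = ∑ k ∈ Finset.range (d + 1), (z ^ k • M) * C k := by
  simp only [mpoly, Matrix.mul_sum, Matrix.mul_smul, Matrix.smul_mul]

lemma pow_smul_mpoly_inv (C : ℕ → M) (d : ℕ) {z : K} (hz : z ≠ 0) :
    z ^ d • mpoly C d z⁻¹ = mpoly (fun k => C (d - k)) d z := by
  rw [mpoly, mpoly, ← Finset.sum_range_reflect, Finset.smul_sum]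
  refine Finset.sum_congr rfl fun k hk => ?_
  have hkd : k ≤ d := Nat.lt_succ_iff.mp (Finset.mem_range.mp hk)
  rw [smul_smul, Nat.add_sub_cancel, inv_pow, ← pow_sub₀ _ hz (Nat.sub_le d k),
    Nat.sub_sub_self hkd]

/-- `X ^ n * (X + X⁻¹) ^ k`, a polynomial for `k ≤ n`. -/
def joukPoly (n k : ℕ) : ℕ[X] := X ^ (n - k) * (X ^ 2 + 1) ^ k

lemma aeval_joukPoly {n k : ℕ} (hk : k ≤ n) {z : K} (hz : z ≠ 0) :
    aeval z (joukPoly n k) = z ^ n * (z + z⁻¹) ^ k := by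
  rw [joukPoly, map_mul, map_pow, map_pow, map_add, map_pow, aeval_X, map_one,
    ← Nat.sub_add_cancel hk, pow_add, Nat.add_sub_cancel, mul_assoc, ← mul_pow, mul_add,
    mul_inv_cancel₀ hz, sq]

lemma natDegree_joukPoly_le {n k : ℕ} (hk : k ≤ n) : (joukPoly n k).natDegree ≤ n + k := by
  unfold joukPoly
  compute_degree
  omega

lemma coeff_joukPoly_zero {n k : ℕ} (hk : k ≤ n) :
    (joukPoly n k).coeff 0 = if k = n then 1 else 0 := by
  rw [coeff_zero_eq_eval_zero, joukPoly]
  split_ifs with h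
  · simp [h]
  · simp [zero_pow (Nat.sub_ne_zero_of_lt (lt_of_le_of_ne hk h))]

lemma coeff_joukPoly_two_mul {n k : ℕ} (hk : k ≤ n) :
    (joukPoly n k).coeff (2 * n) = if k = n then 1 else 0 := by
  split_ifs with h
  · have hmonic : ((X ^ 2 + 1 : ℕ[X]) ^ n).Monic := (monic_X_pow_add_C 1 two_ne_zero).pow n
    have hdeg : ((X ^ 2 + 1 : ℕ[X]) ^ n).natDegree = 2 * n := by
      rw [natDegree_pow, ← C_1, natDegree_X_pow_add_C, mul_comm]
    rw [h, joukPoly, Nat.sub_self, pow_zero, one_mul, ← hdeg, hmonic.coeff_natDegree]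
  · exact coeff_eq_zero_of_natDegree_lt ((natDegree_joukPoly_le hk).trans_lt (by omega))

def joukCoeff (n : ℕ) (Q : ℕ → M) (m : ℕ) : M :=
  ∑ k ∈ Finset.range (n + 1), (joukPoly n k).coeff m • Q k

lemma joukCoeff_of_coeff_eq {n m : ℕ} (Q : ℕ → M)
    (h : ∀ k ≤ n, (joukPoly n k).coeff m = if k = n then 1 else 0) : joukCoeff n Q m = Q n := by
  rw [joukCoeff, Finset.sum_eq_single n]
  · rw [h n le_rfl, if_pos rfl, one_smul]
  · intro k hk hkn
    rw [h k (Nat.lt_succ_iff.mp (Finset.mem_range.mp hk)), if_neg hkn, zero_smul]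
  · exact fun hn => absurd (Finset.self_mem_range_succ n) hn

lemma joukCoeff_zero (n : ℕ) (Q : ℕ → M) : joukCoeff n Q 0 = Q n :=
  joukCoeff_of_coeff_eq Q fun _ => coeff_joukPoly_zero

lemma joukCoeff_two_mul (n : ℕ) (Q : ℕ → M) : joukCoeff n Q (2 * n) = Q n :=
  joukCoeff_of_coeff_eq Q fun _ => coeff_joukPoly_two_mul

lemma mpoly_joukCoeff (n : ℕ) (Q : ℕ → M) {z : K} (hz : z ≠ 0) :
    mpoly (joukCoeff n Q) (2 * n) z = z ^ n • mpoly Q n (z + z⁻¹) := by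
  simp only [mpoly, joukCoeff, Finset.smul_sum, smul_smul]
  rw [Finset.sum_comm]
  refine Finset.sum_congr rfl fun k hk => ?_
  have hkn : k ≤ n := Nat.lt_succ_iff.mp (Finset.mem_range.mp hk)
  rw [← aeval_joukPoly hkn hz, aeval_eq_sum_range' (n := 2 * n + 1)
    ((natDegree_joukPoly_le hkn).trans_lt (by omega)), Finset.sum_smul]
  refine Finset.sum_congr rfl fun m _ => ?_
  rw [smul_assoc, smul_comm]

end MatrixPolynomial

def circ (θ : ℝ) : ℂ := exp (θ * I)

def twoCos (θ : ℝ) : ℂ := ((2 * Real.cos θ : ℝ) : ℂ)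

lemma circ_ne_zero (θ : ℝ) : circ θ ≠ 0 := exp_ne_zero _

lemma circ_neg (θ : ℝ) : circ (-θ) = (circ θ)⁻¹ := by
  rw [circ, circ, ← exp_neg]; push_cast; ring_nf

lemma star_circ (θ : ℝ) : star (circ θ) = (circ θ)⁻¹ := by
  rw [← circ_neg, circ, circ, RCLike.star_def, ← exp_conj]; simp

lemma circ_zpow (θ : ℝ) (m : ℤ) : circ θ ^ m = exp (m * θ * I) := by
  rw [circ, ← exp_int_mul]; ring_nf

lemma twoCos_neg (θ : ℝ) : twoCos (-θ) = twoCos θ := by simp [twoCos]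

lemma twoCos_eq (θ : ℝ) : twoCos θ = circ θ + (circ θ)⁻¹ := by
  rw [← circ_neg, circ, circ, twoCos]; push_cast; rw [cos]; ring_nf

lemma eval_chebyshevC_twoCos (m : ℤ) (θ : ℝ) :
    (Polynomial.Chebyshev.C ℂ m).eval (twoCos θ) = circ θ ^ m + circ θ ^ (-m) := by
  rw [circ_zpow, circ_zpow, twoCos]
  push_cast
  rw [Polynomial.Chebyshev.C_two_mul_complex_cos, cos]
  ring_nf

open Polynomial in
lemma natDegree_chebyshevC (m : ℤ) : (Chebyshev.C ℂ m).natDegree = m.natAbs := by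
  have h := congrArg natDegree (Chebyshev.C_comp_two_mul_X ℂ m)
  have hX : (2 * X : ℂ[X]).natDegree = 1 := by compute_degree!
  rwa [natDegree_comp, hX, mul_one, ← C_ofNat, natDegree_C_mul two_ne_zero,
    Chebyshev.natDegree_T] at h

section Circle

variable {ν : Measure ℝ}

lemma memLp_circ_zpow (m : ℤ) : MemLp (fun θ => circ θ ^ m) ⊤ ν :=
  memLp_top_of_bound ((continuous_exp.comp (by fun_prop)).zpow₀ m
    fun θ => Or.inl (circ_ne_zero θ)).aestronglyMeasurable 1
    (Filter.Eventually.of_forall fun θ => by simp [circ, norm_exp])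

lemma memLp_circ_pow (k : ℕ) : MemLp (fun θ => circ θ ^ k) ⊤ ν := by
  simpa only [zpow_natCast] using memLp_circ_zpow (ν := ν) k

lemma memLp_twoCos_pow (k : ℕ) : MemLp (fun θ => twoCos θ ^ k) ⊤ ν :=
  memLp_top_of_bound
    (by unfold twoCos; fun_prop : Continuous fun θ => twoCos θ ^ k).aestronglyMeasurable (2 ^ k)
    (Filter.Eventually.of_forall fun θ => by
      rw [norm_pow, twoCos, norm_real, Real.norm_eq_abs, abs_mul, abs_two]
      exact pow_le_pow_left₀ (by positivity) (by linarith [Real.abs_cos_le_one θ]) k)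

end Circle

section MatIntegral

variable {α : Type*} [MeasurableSpace α] {μ : Measure α} {l m n : Type*}

def matIntegral (μ : Measure α) (X : α → Matrix m n ℂ) : Matrix m n ℂ :=
  of fun a b => ∫ x, X x a b ∂μ

lemma matIntegral_add {X Y : α → Matrix m n ℂ} (hX : ∀ a b, Integrable (fun x => X x a b) μ)
    (hY : ∀ a b, Integrable (fun x => Y x a b) μ) :
    matIntegral μ (fun x => X x + Y x) = matIntegral μ X + matIntegral μ Y := by
  ext a b; exact integral_add (hX a b) (hY a b)

lemma matIntegral_sub {X Y : α → Matrix m n ℂ} (hX : ∀ a b, Integrable (fun x => X x a b) μ)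
    (hY : ∀ a b, Integrable (fun x => Y x a b) μ) :
    matIntegral μ (fun x => X x - Y x) = matIntegral μ X - matIntegral μ Y := by
  ext a b; exact integral_sub (hX a b) (hY a b)

lemma matIntegral_neg (X : α → Matrix m n ℂ) :
    matIntegral μ (fun x => -X x) = -matIntegral μ X := by
  ext a b; exact integral_neg _

lemma matIntegral_sum {ι : Type*} (s : Finset ι) {X : ι → α → Matrix m n ℂ}
    (hX : ∀ i ∈ s, ∀ a b, Integrable (fun x => X i x a b) μ) :
    matIntegral μ (fun x => ∑ i ∈ s, X i x) = ∑ i ∈ s, matIntegral μ (X i) := by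
  ext a b
  simp only [matIntegral, of_apply, Matrix.sum_apply]
  exact integral_finsetSum s fun i hi => hX i hi a b

lemma matIntegral_smul (c : ℂ) (X : α → Matrix m n ℂ) :
    matIntegral μ (fun x => c • X x) = c • matIntegral μ X := by
  ext a b; exact integral_const_mul c _

lemma matIntegral_const_mul [Fintype m] (A : Matrix l m ℂ) {X : α → Matrix m n ℂ}
    (hX : ∀ a b, Integrable (fun x => X x a b) μ) :
    matIntegral μ (fun x => A * X x) = A * matIntegral μ X := by
  ext a b
  simp only [matIntegral, of_apply, mul_apply]
  rw [integral_finsetSum _ fun c _ => (hX c b).const_mul _]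
  exact Finset.sum_congr rfl fun c _ => integral_const_mul _ _

lemma matIntegral_mul_const [Fintype n] {X : α → Matrix m n ℂ}
    (hX : ∀ a b, Integrable (fun x => X x a b) μ) (B : Matrix n l ℂ) :
    matIntegral μ (fun x => X x * B) = matIntegral μ X * B := by
  ext a b
  simp only [matIntegral, of_apply, mul_apply]
  rw [integral_finsetSum _ fun c _ => (hX a c).mul_const _]
  exact Finset.sum_congr rfl fun c _ => integral_mul_const _ _

lemma integrable_mul_const_apply [Fintype n] {X : α → Matrix m n ℂ}
    (hX : ∀ a b, Integrable (fun x => X x a b) μ) (B : Matrix n l ℂ) (a : m) (b : l) :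
    Integrable (fun x => (X x * B) a b) μ :=
  integrable_finsetSum _ fun c _ => (hX a c).mul_const _

lemma integrable_trace [Fintype n] {X : α → Matrix n n ℂ}
    (hX : ∀ a b, Integrable (fun x => X x a b) μ) : Integrable (fun x => (X x).trace) μ :=
  integrable_finsetSum _ fun a _ => hX a a

lemma integral_trace [Fintype n] {X : α → Matrix n n ℂ}
    (hX : ∀ a b, Integrable (fun x => X x a b) μ) :
    ∫ x, (X x).trace ∂μ = (matIntegral μ X).trace :=
  integral_finsetSum _ fun a _ => hX a a

lemma matIntegral_comp_neg [AddGroup α] [MeasurableNeg α] [μ.IsNegInvariant]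
    (X : α → Matrix m n ℂ) : matIntegral μ (fun x => X (-x)) = matIntegral μ X := by
  ext a b; exact integral_neg_eq_self (fun x => X x a b) μ

end MatIntegral


section WeightedMoment

variable {ι : Type*} {ν : Measure ℝ}

def EssBddEntries (ν : Measure ℝ) (F : ℝ → Matrix ι ι ℂ) : Prop :=
  ∀ a b, MemLp (fun θ => F θ a b) ⊤ ν

lemma essBddEntries_sum_smul {s : Finset ℕ} {w : ℕ → ℝ → ℂ} (hw : ∀ k ∈ s, MemLp (w k) ⊤ ν)
    (C : ℕ → Matrix ι ι ℂ) : EssBddEntries ν (fun θ => ∑ k ∈ s, w k θ • C k) := by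
  intro a b
  simp only [Matrix.sum_apply, Matrix.smul_apply, smul_eq_mul]
  exact memLp_finsetSum s fun k hk => (hw k hk).mul_const _

lemma essBddEntries_mpoly_circ (C : ℕ → Matrix ι ι ℂ) (d : ℕ) :
    EssBddEntries ν (fun θ => mpoly C d (circ θ)) :=
  essBddEntries_sum_smul (fun k _ => memLp_circ_pow k) C

lemma essBddEntries_mpoly_twoCos (C : ℕ → Matrix ι ι ℂ) (d : ℕ) :
    EssBddEntries ν (fun θ => mpoly C d (twoCos θ)) :=
  essBddEntries_sum_smul (fun k _ => memLp_twoCos_pow k) C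

variable [Fintype ι] {g : ℝ → Matrix ι ι ℂ}

variable (ν g) in
/-- `⟪⟪F, w 1⟫⟫ = ∫ Fᴴ dΣ w` for the matrix measure `dΣ = g dν` in angle coordinates. -/
def rightInner (F : ℝ → Matrix ι ι ℂ) (w : ℝ → ℂ) : Matrix ι ι ℂ :=
  matIntegral ν fun θ => w θ • ((F θ)ᴴ * g θ)

lemma integrable_rightInner_apply (hg : ∀ a b, Integrable (fun θ => g θ a b) ν)
    {F : ℝ → Matrix ι ι ℂ} (hF : EssBddEntries ν F) {w : ℝ → ℂ} (hw : MemLp w ⊤ ν) (a b : ι) :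
    Integrable (fun θ => (w θ • ((F θ)ᴴ * g θ)) a b) ν := by
  simp only [Matrix.smul_apply, mul_apply, conjTranspose_apply, smul_eq_mul, Finset.mul_sum]
  refine integrable_finsetSum _ fun c _ => ?_
  refine ((hg c b).mul_of_top_left (hw.mul' (hF c a).star)).congr (ae_of_all _ fun θ => ?_)
  simp only [Pi.mul_apply, Pi.star_apply]
  ring

lemma rightInner_add_left (hg : ∀ a b, Integrable (fun θ => g θ a b) ν) {F G : ℝ → Matrix ι ι ℂ}
    (hF : EssBddEntries ν F) (hG : EssBddEntries ν G) {w : ℝ → ℂ} (hw : MemLp w ⊤ ν) :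
    rightInner ν g (fun θ => F θ + G θ) w = rightInner ν g F w + rightInner ν g G w := by
  simp only [rightInner]
  rw [← matIntegral_add (integrable_rightInner_apply hg hF hw)
    (integrable_rightInner_apply hg hG hw)]
  simp only [conjTranspose_add, Matrix.add_mul, smul_add]

lemma rightInner_sub_left (hg : ∀ a b, Integrable (fun θ => g θ a b) ν) {F G : ℝ → Matrix ι ι ℂ}
    (hF : EssBddEntries ν F) (hG : EssBddEntries ν G) {w : ℝ → ℂ} (hw : MemLp w ⊤ ν) :
    rightInner ν g (fun θ => F θ - G θ) w = rightInner ν g F w - rightInner ν g G w := by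
  simp only [rightInner]
  rw [← matIntegral_sub (integrable_rightInner_apply hg hF hw)
    (integrable_rightInner_apply hg hG hw)]
  simp only [conjTranspose_sub, Matrix.sub_mul, smul_sub]

lemma rightInner_neg_left (F : ℝ → Matrix ι ι ℂ) (w : ℝ → ℂ) :
    rightInner ν g (fun θ => -F θ) w = -rightInner ν g F w := by
  simp only [rightInner]
  rw [← matIntegral_neg]
  simp only [conjTranspose_neg, Matrix.neg_mul, smul_neg]

lemma rightInner_mul_const (hg : ∀ a b, Integrable (fun θ => g θ a b) ν) {F : ℝ → Matrix ι ι ℂ}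
    (hF : EssBddEntries ν F) {w : ℝ → ℂ} (hw : MemLp w ⊤ ν) (V : Matrix ι ι ℂ) :
    rightInner ν g (fun θ => F θ * V) w = Vᴴ * rightInner ν g F w := by
  simp only [rightInner]
  rw [← matIntegral_const_mul _ (integrable_rightInner_apply hg hF hw)]
  simp only [conjTranspose_mul, Matrix.mul_assoc, mul_smul_comm]

lemma rightInner_smul_left (u : ℝ → ℂ) (F : ℝ → Matrix ι ι ℂ) (w : ℝ → ℂ) :
    rightInner ν g (fun θ => u θ • F θ) w = rightInner ν g F (fun θ => star (u θ) * w θ) := by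
  simp only [rightInner, conjTranspose_smul, smul_mul_assoc, smul_smul, mul_comm]

lemma rightInner_comp_neg [ν.IsNegInvariant] (hg : ∀ θ, g (-θ) = g θ) (F : ℝ → Matrix ι ι ℂ)
    (w : ℝ → ℂ) : rightInner ν g (fun θ => F (-θ)) (fun θ => w (-θ)) = rightInner ν g F w := by
  simp only [rightInner]
  rw [← matIntegral_comp_neg]
  simp only [neg_neg, hg]

lemma rightInner_add_weight (hg : ∀ a b, Integrable (fun θ => g θ a b) ν) {F : ℝ → Matrix ι ι ℂ}
    (hF : EssBddEntries ν F) {w₁ w₂ : ℝ → ℂ} (hw₁ : MemLp w₁ ⊤ ν) (hw₂ : MemLp w₂ ⊤ ν) :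
    rightInner ν g F (fun θ => w₁ θ + w₂ θ) = rightInner ν g F w₁ + rightInner ν g F w₂ := by
  simp only [rightInner]
  rw [← matIntegral_add (integrable_rightInner_apply hg hF hw₁)
    (integrable_rightInner_apply hg hF hw₂)]
  simp only [add_smul]

lemma rightInner_sum_weight (hg : ∀ a b, Integrable (fun θ => g θ a b) ν) {F : ℝ → Matrix ι ι ℂ}
    (hF : EssBddEntries ν F) (s : Finset ℕ) (c : ℕ → ℂ) {w : ℕ → ℝ → ℂ}
    (hw : ∀ k ∈ s, MemLp (w k) ⊤ ν) :
    rightInner ν g F (fun θ => ∑ k ∈ s, c k * w k θ) = ∑ k ∈ s, c k • rightInner ν g F (w k) := by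
  simp only [rightInner, Finset.sum_smul, ← smul_smul, ← matIntegral_smul]
  exact matIntegral_sum s fun k hk a b =>
    (integrable_rightInner_apply hg hF (hw k hk) a b).const_mul (c k)

lemma integral_re_trace_mpoly (hg : ∀ a b, Integrable (fun θ => g θ a b) ν)
    (C : ℕ → Matrix ι ι ℂ) (d : ℕ) :
    ∫ θ, (((mpoly C d (circ θ))ᴴ * g θ * mpoly C d (circ θ)).trace).re ∂ν
      = (∑ k ∈ Finset.range (d + 1),
          (rightInner ν g (fun θ => mpoly C d (circ θ)) (fun θ => circ θ ^ k) * C k).trace).re := by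
  have hF := essBddEntries_mpoly_circ (ν := ν) C d
  have hint (k : ℕ) := integrable_mul_const_apply
    (integrable_rightInner_apply hg hF (memLp_circ_pow k)) (C k)
  have hre := integral_re (𝕜 := ℂ) (integrable_finsetSum (Finset.range (d + 1))
    fun k _ => integrable_trace (hint k))
  simp only [RCLike.re_to_complex] at hre
  simp only [mul_mpoly, trace_sum]
  rw [hre, integral_finsetSum _ fun k _ => integrable_trace (hint k)]
  congr 1
  refine Finset.sum_congr rfl fun k _ => ?_
  rw [integral_trace (hint k), rightInner, matIntegral_mul_const]
  exact integrable_rightInner_apply hg hF (memLp_circ_pow k)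

variable (ν g) in
def IsNontrivial : Prop :=
  ∀ (d : ℕ) (C : ℕ → Matrix ι ι ℂ), (∃ k, k ≤ d ∧ C k ≠ 0) →
    0 < ∫ θ, (((mpoly C d (circ θ))ᴴ * g θ * mpoly C d (circ θ)).trace).re ∂ν

lemma eq_zero_of_rightInner_eq_zero (hg : ∀ a b, Integrable (fun θ => g θ a b) ν)
    (hnt : IsNontrivial ν g) {C : ℕ → Matrix ι ι ℂ} {d : ℕ}
    (h : ∀ k ≤ d, C k = 0 ∨
      rightInner ν g (fun θ => mpoly C d (circ θ)) (fun θ => circ θ ^ k) = 0) :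
    ∀ k ≤ d, C k = 0 := by
  by_contra! hC
  have hpos := hnt d C hC
  rw [integral_re_trace_mpoly hg, Finset.sum_eq_zero fun k hk => ?_] at hpos
  · simp at hpos
  · rcases h k (Nat.lt_succ_iff.mp (Finset.mem_range.mp hk)) with h0 | h0 <;> simp [h0]

end WeightedMoment

section Orthogonality

variable {ι : Type*} [Fintype ι] {ν : Measure ℝ} {g : ℝ → Matrix ι ι ℂ}

lemma rightInner_mpoly_reverse [ν.IsNegInvariant] (hgeven : ∀ θ, g (-θ) = g θ)
    {C : ℕ → Matrix ι ι ℂ} {N : ℕ}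
    (horth : ∀ j < N, rightInner ν g (fun θ => mpoly C N (circ θ)) (fun θ => circ θ ^ j) = 0)
    {k : ℕ} (hk : 1 ≤ k) (hkN : k ≤ N) :
    rightInner ν g (fun θ => mpoly (fun j => C (N - j)) N (circ θ)) (fun θ => circ θ ^ k) = 0 := by
  have hweight : (fun θ => star (circ θ ^ N) * circ θ ^ k) = fun θ => circ (-θ) ^ (N - k) := by
    funext θ
    obtain ⟨r, rfl⟩ := Nat.exists_eq_add_of_le hkN
    rw [star_pow, star_circ, circ_neg, Nat.add_sub_cancel_left, pow_add, inv_pow, inv_pow,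
      mul_comm, ← mul_assoc, mul_inv_cancel₀ (pow_ne_zero _ (circ_ne_zero θ)), one_mul]
  calc rightInner ν g (fun θ => mpoly (fun j => C (N - j)) N (circ θ)) (fun θ => circ θ ^ k)
      = rightInner ν g (fun θ => circ θ ^ N • mpoly C N (circ (-θ))) (fun θ => circ θ ^ k) := by
        simp only [circ_neg, pow_smul_mpoly_inv _ _ (circ_ne_zero _)]
    _ = rightInner ν g (fun θ => mpoly C N (circ (-θ))) (fun θ => circ (-θ) ^ (N - k)) := by
        rw [rightInner_smul_left, hweight]
    _ = 0 := by
        rw [rightInner_comp_neg hgeven (fun θ => mpoly C N (circ θ)) (fun θ => circ θ ^ (N - k))]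
        exact horth _ (by omega)

lemma rightInner_mpoly_add_reverse (hg : ∀ a b, Integrable (fun θ => g θ a b) ν) [ν.IsNegInvariant]
    (hgeven : ∀ θ, g (-θ) = g θ) {C : ℕ → Matrix ι ι ℂ} {N : ℕ}
    (horth : ∀ j < N, rightInner ν g (fun θ => mpoly C N (circ θ)) (fun θ => circ θ ^ j) = 0)
    {k : ℕ} (hk : 1 ≤ k) (hkN : k < N) :
    rightInner ν g (fun θ => mpoly (fun j => C j + C (N - j)) N (circ θ))
      (fun θ => circ θ ^ k) = 0 := by
  simp only [mpoly_add]
  rw [rightInner_add_left hg (essBddEntries_mpoly_circ _ _) (essBddEntries_mpoly_circ _ _)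
    (memLp_circ_pow k), horth k hkN, rightInner_mpoly_reverse hgeven horth hk hkN.le, add_zero]

lemma isUnit_one_add_coeff_zero [DecidableEq ι] (hg : ∀ a b, Integrable (fun θ => g θ a b) ν)
    [ν.IsNegInvariant] (hgeven : ∀ θ, g (-θ) = g θ) (hnt : IsNontrivial ν g)
    {C : ℕ → Matrix ι ι ℂ} {N : ℕ} (hCN : C N = 1)
    (horth : ∀ j < N, rightInner ν g (fun θ => mpoly C N (circ θ)) (fun θ => circ θ ^ j) = 0) :
    IsUnit (1 + C 0) := by
  rw [IsArtinianRing.isUnit_iff_isLeftRegular]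
  refine isLeftRegular_of_non_zero_divisor _ fun V hV => ?_
  rcases N.eq_zero_or_pos with rfl | hN
  · rw [hCN, ← two_smul ℂ (1 : Matrix ι ι ℂ), smul_mul_assoc, one_mul, smul_eq_zero] at hV
    exact hV.resolve_left two_ne_zero
  have hsym : ∀ k ≤ N, (C k + C (N - k)) * V = 0 := eq_zero_of_rightInner_eq_zero hg hnt
    fun k hk => by
      rcases Nat.eq_zero_or_pos k with rfl | hk0
      · left; rwa [Nat.sub_zero, hCN, add_comm]
      rcases eq_or_lt_of_le hk with rfl | hkN
      · left; rwa [Nat.sub_self, hCN]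
      right
      simp only [← mpoly_mul_const]
      rw [rightInner_mul_const hg (essBddEntries_mpoly_circ _ _) (memLp_circ_pow k),
        rightInner_mpoly_add_reverse hg hgeven horth hk0 hkN, mul_zero]
  have hU : ∀ k ≤ N, C k * V = 0 := eq_zero_of_rightInner_eq_zero hg hnt fun k hk => by
    right
    rcases eq_or_lt_of_le hk with rfl | hkN
    · have hrev : ∀ θ, mpoly (fun j => C j * V) k (circ θ)
          = -(mpoly (fun j => C (k - j)) k (circ θ) * V) := fun θ => by
        rw [mpoly_mul_const, ← mpoly_neg]
        exact mpoly_congr (fun j hj => eq_neg_of_add_eq_zero_left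
          (by rw [← Matrix.add_mul]; exact hsym j hj)) _
      simp only [hrev]
      rw [rightInner_neg_left,
        rightInner_mul_const hg (essBddEntries_mpoly_circ _ _) (memLp_circ_pow k),
        rightInner_mpoly_reverse hgeven horth hN le_rfl, mul_zero, neg_zero]
    · simp only [← mpoly_mul_const]
      rw [rightInner_mul_const hg (essBddEntries_mpoly_circ _ _) (memLp_circ_pow k), horth k hkN,
        mul_zero]
  simpa [hCN] using hU N le_rfl

lemma rightInner_mpoly_twoCos_zpow (hg : ∀ a b, Integrable (fun θ => g θ a b) ν) [ν.IsNegInvariant]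
    (hgeven : ∀ θ, g (-θ) = g θ) {Q : ℕ → Matrix ι ι ℂ} {n : ℕ}
    (horth : ∀ j < n, rightInner ν g (fun θ => mpoly Q n (twoCos θ)) (fun θ => twoCos θ ^ j) = 0)
    {m : ℤ} (hm : m.natAbs < n) :
    rightInner ν g (fun θ => mpoly Q n (twoCos θ)) (fun θ => circ θ ^ m) = 0 := by
  have hF := essBddEntries_mpoly_twoCos (ν := ν) Q n
  have hsymm : rightInner ν g (fun θ => mpoly Q n (twoCos θ)) (fun θ => circ θ ^ (-m))
      = rightInner ν g (fun θ => mpoly Q n (twoCos θ)) (fun θ => circ θ ^ m) := by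
    rw [← rightInner_comp_neg hgeven]
    simp only [twoCos_neg, circ_neg, _root_.inv_zpow', neg_neg]
  have hcheb : (fun θ => circ θ ^ m + circ θ ^ (-m)) = fun θ =>
      ∑ s ∈ Finset.range (m.natAbs + 1), (Polynomial.Chebyshev.C ℂ m).coeff s * twoCos θ ^ s := by
    funext θ
    rw [← eval_chebyshevC_twoCos, Polynomial.eval_eq_sum_range' (n := m.natAbs + 1)
      (by rw [natDegree_chebyshevC]; omega)]
  have hsum : rightInner ν g (fun θ => mpoly Q n (twoCos θ)) (fun θ => circ θ ^ m)
      + rightInner ν g (fun θ => mpoly Q n (twoCos θ)) (fun θ => circ θ ^ (-m)) = 0 := by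
    rw [← rightInner_add_weight hg hF (memLp_circ_zpow m) (memLp_circ_zpow (-m)), hcheb,
      rightInner_sum_weight hg hF _ _ fun s _ => memLp_twoCos_pow s]
    exact Finset.sum_eq_zero fun s hs => by
      rw [horth s (by have := Finset.mem_range.mp hs; omega), smul_zero]
  rw [hsymm, ← two_smul ℂ] at hsum
  exact (smul_eq_zero.mp hsum).resolve_left two_ne_zero

lemma rightInner_mpoly_joukCoeff (hg : ∀ a b, Integrable (fun θ => g θ a b) ν) [ν.IsNegInvariant]
    (hgeven : ∀ θ, g (-θ) = g θ) {Q : ℕ → Matrix ι ι ℂ} {n : ℕ}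
    (horth : ∀ j < n, rightInner ν g (fun θ => mpoly Q n (twoCos θ)) (fun θ => twoCos θ ^ j) = 0)
    (τ : Matrix ι ι ℂ) {k : ℕ} (hk : 1 ≤ k) (hkn : k < 2 * n) :
    rightInner ν g (fun θ => mpoly (joukCoeff n fun j => Q j * τ) (2 * n) (circ θ))
      (fun θ => circ θ ^ k) = 0 := by
  have hweight : (fun θ => star (circ θ ^ n) * circ θ ^ k) = fun θ => circ θ ^ ((k : ℤ) - n) := by
    funext θ
    rw [star_pow, star_circ, inv_pow, ← zpow_natCast, ← zpow_natCast, ← _root_.zpow_neg,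
      ← zpow_add₀ (circ_ne_zero θ), neg_add_eq_sub]
  calc rightInner ν g (fun θ => mpoly (joukCoeff n fun j => Q j * τ) (2 * n) (circ θ))
        (fun θ => circ θ ^ k)
      = rightInner ν g (fun θ => circ θ ^ n • (mpoly Q n (twoCos θ) * τ))
          (fun θ => circ θ ^ k) := by
        simp only [mpoly_joukCoeff _ _ (circ_ne_zero _), twoCos_eq, mpoly_mul_const]
    _ = τᴴ * rightInner ν g (fun θ => mpoly Q n (twoCos θ)) (fun θ => circ θ ^ ((k : ℤ) - n)) := by
        rw [rightInner_smul_left, hweight,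
          rightInner_mul_const hg (essBddEntries_mpoly_twoCos Q n) (memLp_circ_zpow _)]
    _ = 0 := by rw [rightInner_mpoly_twoCos_zpow hg hgeven horth (by omega), mul_zero]

theorem mpoly_add_pow_smul_inv_eq [DecidableEq ι] (hg : ∀ a b, Integrable (fun θ => g θ a b) ν)
    [ν.IsNegInvariant] (hgeven : ∀ θ, g (-θ) = g θ) (hnt : IsNontrivial ν g)
    {C Q : ℕ → Matrix ι ι ℂ} {n : ℕ} (hC : C (2 * n) = 1) (hQ : Q n = 1)
    (horthC : ∀ j < 2 * n,
      rightInner ν g (fun θ => mpoly C (2 * n) (circ θ)) (fun θ => circ θ ^ j) = 0)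
    (horthQ : ∀ j < n, rightInner ν g (fun θ => mpoly Q n (twoCos θ)) (fun θ => twoCos θ ^ j) = 0)
    {z : ℂ} (hz : z ≠ 0) :
    mpoly C (2 * n) z + z ^ (2 * n) • mpoly C (2 * n) z⁻¹
      = z ^ n • (mpoly Q n (z + z⁻¹) * (1 + C 0)) := by
  have hD : ∀ k ≤ 2 * n, C k + C (2 * n - k) - joukCoeff n (fun j => Q j * (1 + C 0)) k = 0 :=
    eq_zero_of_rightInner_eq_zero hg hnt fun k hk => by
      rcases Nat.eq_zero_or_pos k with rfl | hk0
      · left; rw [joukCoeff_zero, hQ, one_mul, Nat.sub_zero, hC, add_comm, sub_self]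
      rcases eq_or_lt_of_le hk with rfl | hkn
      · left; rw [joukCoeff_two_mul, hQ, one_mul, Nat.sub_self, hC, sub_self]
      right
      simp only [mpoly_sub]
      rw [rightInner_sub_left hg (essBddEntries_mpoly_circ _ _) (essBddEntries_mpoly_circ _ _)
        (memLp_circ_pow k), rightInner_mpoly_add_reverse hg hgeven horthC hk0 hkn,
        rightInner_mpoly_joukCoeff hg hgeven horthQ _ hk0 hkn, sub_zero]
  have hzero := mpoly_congr hD z
  rw [mpoly_sub, mpoly_add, ← pow_smul_mpoly_inv _ _ hz, mpoly_joukCoeff _ _ hz,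
    ← mpoly_mul_const] at hzero
  exact sub_eq_zero.mp (hzero.trans (by simp [mpoly]))

end Orthogonality

end
end YakhlefMarcellan

open YakhlefMarcellan

theorem yakhlef_marcellan_general (p n : ℕ)
    (ν : Measure ℝ)
    (hν : Measure.map (fun θ : ℝ => -θ) ν = ν)
    (g : ℝ → Matrix (Fin p) (Fin p) ℂ)
    (hgsym : ∀ θ : ℝ, g (-θ) = g θ)
    (hgInt : ∀ a b : Fin p, Integrable (fun θ : ℝ => g θ a b) ν)
    -- nontriviality of the measure on the circle
    (hnontriv : ∀ (d : ℕ) (C : ℕ → Matrix (Fin p) (Fin p) ℂ), (∃ k, k ≤ d ∧ C k ≠ 0) →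
      0 < ∫ θ : ℝ,
        ((((∑ k ∈ Finset.range (d + 1), Complex.exp (θ * Complex.I) ^ k • C k)ᴴ * g θ
          * (∑ k ∈ Finset.range (d + 1), Complex.exp (θ * Complex.I) ^ k • C k)).trace).re) ∂ν)
    -- monic matrix polynomials on the circle and on the real line, via coefficients
    (Φc Pc : ℕ → ℕ → Matrix (Fin p) (Fin p) ℂ)
    (hΦmonic : ∀ m, Φc m m = 1 ∧ ∀ k, m < k → Φc m k = 0)
    (hPmonic : ∀ m, Pc m m = 1 ∧ ∀ k, m < k → Pc m k = 0)
    (Φ P : ℕ → ℂ → Matrix (Fin p) (Fin p) ℂ)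
    (hΦ : ∀ m z, Φ m z = ∑ k ∈ Finset.range (m + 1), z ^ k • Φc m k)
    (hP : ∀ m x, P m x = ∑ k ∈ Finset.range (m + 1), x ^ k • Pc m k)
    -- right orthogonality of `Φ_m` to `z^j 1`, `j < m`, with respect to the circle measure
    (hΦorth : ∀ m, ∀ j < m, ∀ a b : Fin p,
      (∫ θ : ℝ, (Complex.exp (θ * Complex.I) ^ j
        * ((Φ m (Complex.exp (θ * Complex.I)))ᴴ * g θ) a b) ∂ν) = 0)
    -- right orthogonality of `P̂_m` to `x^j 1`, `j < m`, with respect to the image measure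
    (hPorth : ∀ m, ∀ j < m, ∀ a b : Fin p,
      (∫ θ : ℝ, (((2 * Real.cos θ : ℝ) : ℂ) ^ j
        * ((P m ((2 * Real.cos θ : ℝ) : ℂ))ᴴ * g θ) a b) ∂ν) = 0) :
    ∀ z : ℂ, z ≠ 0 →
      P n (z + z⁻¹)
        = (z ^ (-(n : ℤ)) • Φ (2 * n) z + z ^ ((n : ℤ)) • Φ (2 * n) z⁻¹)
          * ((1 : Matrix (Fin p) (Fin p) ℂ) + Φ (2 * n) 0)⁻¹ := by
  intro z hz
  have : ν.IsNegInvariant := ⟨hν⟩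
  have hΦeq : Φ (2 * n) = mpoly (Φc (2 * n)) (2 * n) := funext (hΦ _)
  have hPeq : P n = mpoly (Pc n) n := funext (hP _)
  have horthΦ : ∀ j < 2 * n, rightInner ν g (fun θ => mpoly (Φc (2 * n)) (2 * n) (circ θ))
      (fun θ => circ θ ^ j) = 0 := fun j hj => by
    rw [← hΦeq]; ext a b; exact hΦorth _ j hj a b
  have horthP : ∀ j < n, rightInner ν g (fun θ => mpoly (Pc n) n (twoCos θ))
      (fun θ => twoCos θ ^ j) = 0 := fun j hj => by
    rw [← hPeq]; ext a b; exact hPorth n j hj a b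
  have hτ := isUnit_one_add_coeff_zero hgInt hgsym hnontriv (hΦmonic _).1 horthΦ
  have key := mpoly_add_pow_smul_inv_eq hgInt hgsym hnontriv (hΦmonic _).1 (hPmonic n).1
    horthΦ horthP hz
  have hzn : z ^ n ≠ 0 := pow_ne_zero n hz
  have hsum : z ^ (-(n : ℤ)) • mpoly (Φc (2 * n)) (2 * n) z
      + z ^ (n : ℤ) • mpoly (Φc (2 * n)) (2 * n) z⁻¹
      = mpoly (Pc n) n (z + z⁻¹) * (1 + Φc (2 * n) 0) := by
    rw [_root_.zpow_neg, zpow_natCast, ← inv_smul_smul₀ hzn (mpoly (Pc n) n _ * _), ← key,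
      smul_add, smul_smul, two_mul, pow_add, inv_mul_cancel_left₀ hzn]
  rw [hΦeq, hPeq, mpoly_zero, hsum,
    mul_nonsing_inv_cancel_right _ _ ((isUnit_iff_isUnit_det _).mp hτ)]

/-- Yakhlef–Marcellán: for a symmetric nontrivial matrix measure on the unit circle
(represented in angle coordinates by a finite symmetric measure `ν` with positive
semidefinite matrix density `g`), the monic orthogonal matrix polynomials `P̂_n` of
the Szegő image on `[-2,2]` and the monic orthogonal matrix polynomials `Φ_{2n}` on
the circle satisfy `P̂_n(z+z⁻¹) = [z^{-n} Φ_{2n}(z) + z^{n} Φ_{2n}(z⁻¹)] τ_n⁻¹`,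
where `τ_n = 1 + Φ_{2n}(0)`. -/
theorem yakhlef_marcellan (p n : ℕ)
    (ν : Measure ℝ) [IsFiniteMeasure ν]
    (hν : Measure.map (fun θ : ℝ => -θ) ν = ν)
    (g : ℝ → Matrix (Fin p) (Fin p) ℂ)
    (hgPSD : ∀ θ : ℝ, (g θ).PosSemidef)
    (hgsym : ∀ θ : ℝ, g (-θ) = g θ)
    (hgInt : ∀ a b : Fin p, Integrable (fun θ : ℝ => g θ a b) ν)
    -- nontriviality of the measure on the circle
    (hnontriv : ∀ (d : ℕ) (C : ℕ → Matrix (Fin p) (Fin p) ℂ), (∃ k, k ≤ d ∧ C k ≠ 0) →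
      0 < ∫ θ : ℝ,
        ((((∑ k ∈ Finset.range (d + 1), Complex.exp (θ * Complex.I) ^ k • C k)ᴴ * g θ
          * (∑ k ∈ Finset.range (d + 1), Complex.exp (θ * Complex.I) ^ k • C k)).trace).re) ∂ν)
    -- monic matrix polynomials on the circle and on the real line, via coefficients
    (Φc Pc : ℕ → ℕ → Matrix (Fin p) (Fin p) ℂ)
    (hΦmonic : ∀ m, Φc m m = 1 ∧ ∀ k, m < k → Φc m k = 0)
    (hPmonic : ∀ m, Pc m m = 1 ∧ ∀ k, m < k → Pc m k = 0)
    (Φ P : ℕ → ℂ → Matrix (Fin p) (Fin p) ℂ)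
    (hΦ : ∀ m z, Φ m z = ∑ k ∈ Finset.range (m + 1), z ^ k • Φc m k)
    (hP : ∀ m x, P m x = ∑ k ∈ Finset.range (m + 1), x ^ k • Pc m k)
    -- right orthogonality of `Φ_m` to `z^j 1`, `j < m`, with respect to the circle measure
    (hΦorth : ∀ m, ∀ j < m, ∀ a b : Fin p,
      (∫ θ : ℝ, (Complex.exp (θ * Complex.I) ^ j
        * ((Φ m (Complex.exp (θ * Complex.I)))ᴴ * g θ) a b) ∂ν) = 0)
    -- right orthogonality of `P̂_m` to `x^j 1`, `j < m`, with respect to the image measure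
    (hPorth : ∀ m, ∀ j < m, ∀ a b : Fin p,
      (∫ θ : ℝ, (((2 * Real.cos θ : ℝ) : ℂ) ^ j
        * ((P m ((2 * Real.cos θ : ℝ) : ℂ))ᴴ * g θ) a b) ∂ν) = 0) :
    ∀ z : ℂ, z ≠ 0 →
      P n (z + z⁻¹)
        = (z ^ (-(n : ℤ)) • Φ (2 * n) z + z ^ ((n : ℤ)) • Φ (2 * n) z⁻¹)
          * ((1 : Matrix (Fin p) (Fin p) ℂ) + Φ (2 * n) 0)⁻¹ :=
  yakhlef_marcellan_general p n ν hν g hgsym hgInt hnontriv Φc Pc hΦmonic hPmonic Φ P hΦ hP hΦorth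
    hPorth
end
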